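/- arXiv:2602.03346 — 2 statements merged into one kernel-verified Lean document; each statement's English description precedes it below -/
import Mathlib

section
/- Let A ∈ ℝ_ε^{n×m}, B ∈ ℝ_⊤^{m×p} be regular and C, D ∈ ℝ^{p×n}. Suppose every row sum of the matrix [C D] ∈ ℝ^{p×2n} equals 1, i.e., (C + D)·𝟏 = 𝟏. If x, w ∈ ℝ^n satisfy x = A ⊗ (B ⊗' (C·x' + D·w)) whenever x' plays the role of the previous state, then the system map f(x', w) = A ⊗ (B ⊗' (C·x' + D·w)) satisfies f(x' + h𝟏, w + h𝟏) = f(x', w) + h𝟏 for all h ∈ ℝ. -/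
/-! Translation by a real number `h` is an order automorphism of `EReal`, so it commutes with
every `⨆` and `⨅`, and hence with the max-min-plus map `v ↦ A ⊗ (B ⊗' v)`. Because the rows
of `[C D]` sum to `1`, shifting both arguments of the affine map `(x, w) ↦ C x + D w` by `h𝟏`
shifts its value by `h𝟏`, and composing the two gives the claim. -/

namespace EReal

noncomputable def addCoeOrderIso (h : ℝ) : EReal ≃o EReal where
  toFun z := z + h
  invFun z := z - h
  left_inv _ := add_sub_cancel_right
  right_inv _ := sub_add_cancel
  map_rel_iff' := (addLECancellable_coe h).add_le_add_iff_right

lemma iSup_add_coe {ι : Sort*} (f : ι → EReal) (h : ℝ) :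
    ⨆ i, f i + h = (⨆ i, f i) + h :=
  ((addCoeOrderIso h).map_iSup f).symm

lemma iInf_add_coe {ι : Sort*} (f : ι → EReal) (h : ℝ) :
    ⨅ i, f i + h = (⨅ i, f i) + h :=
  ((addCoeOrderIso h).map_iInf f).symm

lemma iSup_add_iInf_add_coe_add {ι κ : Sort*} (a : ι → EReal) (B : ι → κ → EReal)
    (u : κ → ℝ) (h : ℝ) :
    ⨆ j, a j + ⨅ l, B j l + ((u l + h : ℝ) : EReal) = (⨆ j, a j + ⨅ l, B j l + u l) + h := by
  simp_rw [coe_add, ← add_assoc, iInf_add_coe, ← add_assoc, iSup_add_coe]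

end EReal

lemma Matrix.mulVec_add_const {ι κ R : Type*} [Fintype κ] [NonUnitalNonAssocSemiring R]
    (M : Matrix ι κ R) (x : κ → R) (h : R) :
    M.mulVec (x + fun _ => h) = M.mulVec x + fun l => (∑ i, M l i) * h := by
  ext l
  simp only [Pi.add_apply, Matrix.mulVec, dotProduct, mul_add, Finset.sum_add_distrib,
    Finset.sum_mul]

lemma Matrix.mulVec_add_mulVec_add_const {ι κ R : Type*} [Fintype κ] [NonAssocSemiring R]
    {C D : Matrix ι κ R} (hrow : ∀ l, (∑ i, C l i) + (∑ i, D l i) = 1)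
    (x w : κ → R) (h : R) :
    C.mulVec (x + fun _ => h) + D.mulVec (w + fun _ => h) =
      C.mulVec x + D.mulVec w + fun _ => h := by
  ext l
  simp only [Matrix.mulVec_add_const, Pi.add_apply]
  rw [add_add_add_comm, ← add_mul, hrow l, one_mul]

theorem stmt_6_general (n m p : ℕ)
    (A : Fin n → Fin m → EReal) (B : Fin m → Fin p → EReal)
    (C D : Matrix (Fin p) (Fin n) ℝ)
    (hrow : ∀ l : Fin p, (∑ i, C l i) + (∑ i, D l i) = 1) :
    ∀ (x' w : Fin n → ℝ) (h : ℝ) (i : Fin n),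
      (⨆ j, A i j + ⨅ l, B j l +
          (((C.mulVec (x' + fun _ => h) + D.mulVec (w + fun _ => h)) l : ℝ) : EReal))
        = (⨆ j, A i j + ⨅ l, B j l + (((C.mulVec x' + D.mulVec w) l : ℝ) : EReal))
            + (h : EReal) := by
  intro x' w h i
  rw [Matrix.mulVec_add_mulVec_add_const hrow]
  exact EReal.iSup_add_iInf_add_coe_add (A i) B _ h

theorem stmt_6 (n m p : ℕ)
    (A : Fin n → Fin m → EReal) (B : Fin m → Fin p → EReal)
    (C D : Matrix (Fin p) (Fin n) ℝ)
    (hAtop : ∀ i j, A i j ≠ ⊤) (hAreg : ∀ i, ∃ j, A i j ≠ ⊥)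
    (hBbot : ∀ j l, B j l ≠ ⊥) (hBreg : ∀ j, ∃ l, B j l ≠ ⊤)
    (hrow : ∀ l : Fin p, (∑ i, C l i) + (∑ i, D l i) = 1) :
    ∀ (x' w : Fin n → ℝ) (h : ℝ) (i : Fin n),
      (⨆ j, A i j + ⨅ l, B j l +
          (((C.mulVec (x' + fun _ => h) + D.mulVec (w + fun _ => h)) l : ℝ) : EReal))
        = (⨆ j, A i j + ⨅ l, B j l + (((C.mulVec x' + D.mulVec w) l : ℝ) : EReal))
            + (h : EReal) :=
  stmt_6_general n m p A B C D hrow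
end

section
/- Under the hypotheses of the previous support lemma, if additionally T·S_A·S_B·S_D·T⁻¹ is strictly lower triangular for a permutation matrix T, then T·(G_A·G_B·D)·T⁻¹ is strictly lower triangular, and hence I - G_A·G_B·D is invertible. -/
/-!
Conjugating by the permutation matrix of `σ` relabels entries: `(T M T⁻¹) i j = M (σ i) (σ j)`.
The entries of `S_A S_B S_D` are sums of products of nonnegative numbers, so a zero entry forces
every product to vanish, and since `G_A`, `G_B`, `D` are supported inside `S_A`, `S_B`, `S_D`,
the corresponding entry of `G_A G_B D` vanishes too. Hence `G_A G_B D`, relabelled by `σ`, is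
strictly lower triangular; `1` minus it is unitriangular, so has determinant `1`.
-/

open Matrix Equiv

namespace Matrix

variable {l m n R : Type*}

def SupportSubset [Zero R] (A B : Matrix m n R) : Prop :=
  ∀ i j, B i j = 0 → A i j = 0

theorem supportSubset_of_le [Zero R] [PartialOrder R] {A B : Matrix m n R}
    (hA : ∀ i j, 0 ≤ A i j) (hAB : ∀ i j, A i j ≤ B i j) : A.SupportSubset B :=
  fun i j hB => le_antisymm (hB ▸ hAB i j) (hA i j)

theorem mul_apply_nonneg [Fintype m] [Semiring R] [PartialOrder R] [IsOrderedRing R]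
    {A : Matrix l m R} {B : Matrix m n R} (hA : ∀ i j, 0 ≤ A i j) (hB : ∀ i j, 0 ≤ B i j)
    (i : l) (j : n) : 0 ≤ (A * B) i j :=
  Finset.sum_nonneg fun k _ => mul_nonneg (hA i k) (hB k j)

theorem SupportSubset.mul [Fintype m] [Semiring R] [PartialOrder R] [IsOrderedRing R]
    [NoZeroDivisors R]
    {A A' : Matrix l m R} {B B' : Matrix m n R} (hA : ∀ i j, 0 ≤ A i j) (hB : ∀ i j, 0 ≤ B i j)
    (hAA' : A'.SupportSubset A) (hBB' : B'.SupportSubset B) : (A' * B').SupportSubset (A * B) := by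
  intro i j h
  have hterms := (Finset.sum_eq_zero_iff_of_nonneg fun k _ => mul_nonneg (hA i k) (hB k j)).mp h
  refine Finset.sum_eq_zero fun k hk => ?_
  rcases mul_eq_zero.mp (hterms k hk) with hik | hkj
  · exact mul_eq_zero_of_left (hAA' i k hik) _
  · exact mul_eq_zero_of_right _ (hBB' k j hkj)

theorem isUnit_one_sub_of_strictLower [Fintype n] [DecidableEq n] [LinearOrder n] [CommRing R]
    {N : Matrix n n R} (hN : ∀ i j, i ≤ j → N i j = 0) : IsUnit (1 - N) := by
  have hlower : (1 - N).IsLowerTriangular := fun i j (hij : i < j) => by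
    simp [one_apply_ne hij.ne, hN i j hij.le]
  have hdet : (1 - N).det = 1 :=
    (det_of_isLowerTriangular _ hlower).trans
      (Finset.prod_eq_one fun i _ => by simp [hN i i le_rfl])
  rw [isUnit_iff_isUnit_det, hdet]
  exact isUnit_one

theorem exists_eq_permMatrix [Fintype n] [DecidableEq n] [Zero R] [One R] {T : Matrix n n R}
    (h01 : ∀ i j, T i j = 0 ∨ T i j = 1) (hrow : ∀ i, ∃! j, T i j = 1)
    (hcol : ∀ j, ∃! i, T i j = 1) : ∃ σ : Perm n, T = σ.permMatrix R := by
  choose f hf hf_unique using hrow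
  have hinj : f.Injective := fun i i' hii' =>
    (hcol (f i)).unique (hf i) (hii' ▸ hf i')
  refine ⟨Equiv.ofBijective f hinj.bijective_of_finite, Matrix.ext fun i j => ?_⟩
  simp only [Perm.permMatrix, PEquiv.toMatrix_apply, toPEquiv_apply, Option.mem_def,
    Option.some_inj, ofBijective_apply]
  split_ifs with hj
  · exact hj ▸ hf i
  · exact (h01 i j).resolve_right fun h => hj (hf_unique i j h).symm

theorem permMatrix_inv [Fintype n] [DecidableEq n] [CommRing R] (σ : Perm n) :
    (σ.permMatrix R)⁻¹ = σ⁻¹.permMatrix R :=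
  inv_eq_left_inv (by rw [← permMatrix_mul, mul_inv_cancel, permMatrix_one])

theorem permMatrix_mul_mul_inv [Fintype n] [DecidableEq n] [CommRing R] (σ : Perm n)
    (M : Matrix n n R) : σ.permMatrix R * M * (σ.permMatrix R)⁻¹ = M.submatrix σ σ := by
  rw [permMatrix_inv, Perm.permMatrix, Perm.permMatrix, PEquiv.toMatrix_toPEquiv_mul,
    PEquiv.mul_toMatrix_toPEquiv, submatrix_submatrix]
  rfl

end Matrix

theorem stmt_11_general (n m p : ℕ)
    (SA GA : Matrix (Fin n) (Fin m) ℝ) (SB GB : Matrix (Fin m) (Fin p) ℝ)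
    (D : Matrix (Fin p) (Fin n) ℝ) (SD : Matrix (Fin p) (Fin n) ℝ)
    (T : Matrix (Fin n) (Fin n) ℝ)
    (hSA01 : ∀ i j, SA i j = 0 ∨ SA i j = 1)
    (hSB01 : ∀ j l, SB j l = 0 ∨ SB j l = 1)
    (hGA01 : ∀ i j, GA i j = 0 ∨ GA i j = 1)
    (hGB01 : ∀ j l, GB j l = 0 ∨ GB j l = 1)
    (hGA : ∀ i j, GA i j ≤ SA i j)
    (hGB : ∀ j l, GB j l ≤ SB j l)
    (hSD : ∀ l q, SD l q = if D l q ≠ 0 then 1 else 0)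
    (hT01 : ∀ i j, T i j = 0 ∨ T i j = 1)
    (hTrow : ∀ i, ∃! j, T i j = 1)
    (hTcol : ∀ j, ∃! i, T i j = 1)
    (hlow : ∀ i j : Fin n, i ≤ j → (T * (SA * SB * SD) * T⁻¹) i j = 0) :
    (∀ i j : Fin n, i ≤ j → (T * (GA * GB * D) * T⁻¹) i j = 0) ∧
      IsUnit (1 - GA * GB * D) := by
  have nonneg_of_01 {a b : ℕ} {M : Matrix (Fin a) (Fin b) ℝ} (h : ∀ i j, M i j = 0 ∨ M i j = 1)
      (i : Fin a) (j : Fin b) : 0 ≤ M i j := by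
    rcases h i j with h | h <;> simp [h]
  have hSD_nonneg : ∀ l q, 0 ≤ SD l q := fun l q => by rw [hSD]; split_ifs <;> norm_num
  have hD_supp : D.SupportSubset SD := fun l q h => by
    by_contra hD
    simp [hSD, hD] at h
  have hGAB_supp : (GA * GB).SupportSubset (SA * SB) :=
    (supportSubset_of_le (nonneg_of_01 hGA01) hGA).mul (nonneg_of_01 hSA01) (nonneg_of_01 hSB01)
      (supportSubset_of_le (nonneg_of_01 hGB01) hGB)
  have hsupp : (GA * GB * D).SupportSubset (SA * SB * SD) :=
    hGAB_supp.mul (mul_apply_nonneg (nonneg_of_01 hSA01) (nonneg_of_01 hSB01)) hSD_nonneg hD_supp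
  obtain ⟨σ, rfl⟩ := exists_eq_permMatrix hT01 hTrow hTcol
  simp only [permMatrix_mul_mul_inv, submatrix_apply] at hlow ⊢
  have hstrict : ∀ i j, i ≤ j → (GA * GB * D) (σ i) (σ j) = 0 :=
    fun i j hij => hsupp _ _ (hlow i j hij)
  refine ⟨hstrict, ?_⟩
  have hconj : (1 - GA * GB * D).submatrix σ σ = 1 - (GA * GB * D).submatrix σ σ :=
    congrArg (· - (GA * GB * D).submatrix σ σ) (submatrix_one_equiv σ)
  rw [← isUnit_submatrix_equiv σ σ, hconj]
  exact isUnit_one_sub_of_strictLower hstrict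

theorem stmt_11 (n m p : ℕ)
    (SA GA : Matrix (Fin n) (Fin m) ℝ) (SB GB : Matrix (Fin m) (Fin p) ℝ)
    (D : Matrix (Fin p) (Fin n) ℝ) (SD : Matrix (Fin p) (Fin n) ℝ)
    (T : Matrix (Fin n) (Fin n) ℝ)
    (hSA01 : ∀ i j, SA i j = 0 ∨ SA i j = 1)
    (hSB01 : ∀ j l, SB j l = 0 ∨ SB j l = 1)
    (hGA01 : ∀ i j, GA i j = 0 ∨ GA i j = 1)
    (hGB01 : ∀ j l, GB j l = 0 ∨ GB j l = 1)
    (hGArow : ∀ i, ∃! j, GA i j = 1)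
    (hGBrow : ∀ j, ∃! l, GB j l = 1)
    (hGA : ∀ i j, GA i j ≤ SA i j)
    (hGB : ∀ j l, GB j l ≤ SB j l)
    (hSD : ∀ l q, SD l q = if D l q ≠ 0 then 1 else 0)
    (hT01 : ∀ i j, T i j = 0 ∨ T i j = 1)
    (hTrow : ∀ i, ∃! j, T i j = 1)
    (hTcol : ∀ j, ∃! i, T i j = 1)
    (hlow : ∀ i j : Fin n, i ≤ j → (T * (SA * SB * SD) * T⁻¹) i j = 0) :
    (∀ i j : Fin n, i ≤ j → (T * (GA * GB * D) * T⁻¹) i j = 0) ∧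
      IsUnit (1 - GA * GB * D) :=
  stmt_11_general n m p SA GA SB GB D SD T hSA01 hSB01 hGA01 hGB01 hGA hGB hSD hT01 hTrow hTcol hlow
end
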